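/- For 0 < s < 4, let w = exp(i·arccos(1 - s/2)). Then w = 1 - s/2 + i·(s/2)·sqrt(4/s - 1), and for any t with s ≥ t/2 > 0, f_{s-t}(w) = exp(i·(arccos(1-s/2) + ((s-t)/(2√s))·√(4-s))) ≠ 1. -/

import Mathlib

noncomputable def fBeta (β : ℝ) (z : ℂ) : ℂ :=
  z * Complex.exp (((β : ℂ) / 2) * ((1 + z) / (1 - z)))

/-!
On the unit circle, `(1 + w) / (1 - w) = i (1 + cos θ) / sin θ` for `w = e^{iθ}`, so `fBeta β` maps
`e^{iθ}` to `e^{i(θ + β (1 + cos θ) / (2 sin θ))}`. For `θ = arccos (1 - s/2)` one has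
`sin θ = √s √(4-s) / 2` and `(1 + cos θ) / sin θ = √(4-s) / √s`, and the shift
`(s - t) √(4-s) / (2√s)` is at most `sin θ` in absolute value because `|s - t| ≤ s`. Since
`sin θ < θ` and `sin θ = sin (π - θ) < π - θ`, the resulting angle lies in `(0, π)`, so the image
has positive imaginary part and is not `1`.
-/

open Real

namespace Complex

theorem one_add_div_one_sub_exp_I_mul {θ : ℝ} (h : Real.sin θ ≠ 0) :
    (1 + exp (I * θ)) / (1 - exp (I * θ)) = I * ((1 + Real.cos θ) / Real.sin θ : ℝ) := by
  set c := Real.cos θ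
  set s := Real.sin θ
  have hsC : (s : ℂ) ≠ 0 := ofReal_ne_zero.mpr h
  have hw : exp (I * θ) = c + s * I := by
    rw [mul_comm, exp_mul_I, ← ofReal_cos, ← ofReal_sin]
  have h1w : 1 - exp (I * θ) ≠ 0 := by
    intro h0
    apply h
    simpa [hw] using congrArg im h0
  have hpyth : (s : ℂ) ^ 2 + (c : ℂ) ^ 2 = 1 := by
    exact_mod_cast Real.sin_sq_add_cos_sq θ
  rw [div_eq_iff h1w, hw, ofReal_div, ofReal_add, ofReal_one]
  field_simp
  linear_combination I * hpyth + ((s : ℂ) * c + s) * I_sq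

theorem exp_I_mul_ne_one {x : ℝ} (h0 : 0 < x) (hπ : x < π) : exp (I * x) ≠ 1 := by
  intro h
  have him := congrArg im h
  rw [mul_comm, exp_ofReal_mul_I_im] at him
  exact (sin_pos_of_pos_of_lt_pi h0 hπ).ne' (by simpa using him)

end Complex

open Complex in
theorem fBeta_exp_I_mul (β : ℝ) {θ : ℝ} (h : Real.sin θ ≠ 0) :
    fBeta β (exp (I * θ)) = exp (I * (θ + β / 2 * ((1 + Real.cos θ) / Real.sin θ) : ℝ)) := by
  rw [fBeta, one_add_div_one_sub_exp_I_mul h, ← Complex.exp_add]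
  congr 1
  push_cast
  ring

theorem add_mem_Ioo_of_abs_le_sin {θ δ : ℝ} (h0 : 0 < θ) (hπ : θ < π) (hδ : |δ| ≤ sin θ) :
    0 < θ + δ ∧ θ + δ < π := by
  have hlow : sin θ < θ := sin_lt h0
  have hhigh : sin θ < π - θ := by
    simpa only [sin_pi_sub] using sin_lt (sub_pos.mpr hπ)
  constructor <;> linarith [abs_le.mp hδ]

section arccos

variable {s : ℝ}

theorem cos_arccos_one_sub_half (hs0 : 0 < s) (hs4 : s < 4) :
    Real.cos (arccos (1 - s / 2)) = 1 - s / 2 :=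
  Real.cos_arccos (by linarith) (by linarith)

theorem sin_arccos_one_sub_half (hs0 : 0 ≤ s) :
    sin (arccos (1 - s / 2)) = √s * √(4 - s) / 2 := by
  rw [sin_arccos, ← sqrt_mul hs0, ← sqrt_sq (by norm_num : (0 : ℝ) ≤ 2),
    ← sqrt_div' _ (by norm_num)]
  congr 1
  ring

theorem sin_arccos_one_sub_half_pos (hs0 : 0 < s) (hs4 : s < 4) :
    0 < sin (arccos (1 - s / 2)) := by
  rw [sin_arccos_one_sub_half hs0.le]
  have : 0 < 4 - s := by linarith
  positivity

theorem one_add_cos_div_sin_arccos_one_sub_half (hs0 : 0 < s) (hs4 : s < 4) :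
    (1 + Real.cos (arccos (1 - s / 2))) / sin (arccos (1 - s / 2)) = √(4 - s) / √s := by
  have hb : √(4 - s) ^ 2 = 4 - s := sq_sqrt (by linarith)
  have ha : √s ≠ 0 := (sqrt_pos.mpr hs0).ne'
  have hb0 : √(4 - s) ≠ 0 := (sqrt_pos.mpr (by linarith)).ne'
  rw [cos_arccos_one_sub_half hs0 hs4, sin_arccos_one_sub_half hs0.le]
  field_simp
  linear_combination -hb

theorem half_mul_sqrt_four_div_sub_one (hs0 : 0 < s) :
    s / 2 * √(4 / s - 1) = √s * √(4 - s) / 2 := by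
  have hdiv : 4 / s - 1 = (4 - s) / s := by field_simp
  have ha : √s ^ 2 = s := sq_sqrt hs0.le
  have ha0 : √s ≠ 0 := (sqrt_pos.mpr hs0).ne'
  rw [hdiv, sqrt_div' _ hs0.le]
  field_simp
  linear_combination (-√(4 - s)) * ha

theorem abs_sub_div_two_sqrt_mul_sqrt_le {t : ℝ} (hs0 : 0 < s) (ht : 0 ≤ t) (hts : t ≤ 2 * s) :
    |(s - t) / (2 * √s) * √(4 - s)| ≤ √s * √(4 - s) / 2 := by
  have ha : √s ^ 2 = s := sq_sqrt hs0.le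
  have ha0 : √s ≠ 0 := (sqrt_pos.mpr hs0).ne'
  have hshift : (s - t) / (2 * √s) * √(4 - s) = (s - t) / s * (√s * √(4 - s) / 2) := by
    field_simp
    rw [ha]
    ring
  have hratio : |(s - t) / s| ≤ 1 := by
    rw [abs_div, abs_of_pos hs0, div_le_one hs0, abs_le]
    constructor <;> linarith
  rw [hshift, abs_mul, abs_of_nonneg (by positivity : 0 ≤ √s * √(4 - s) / 2)]
  exact mul_le_of_le_one_left (by positivity) hratio

end arccos

theorem stmt_3 (s t : ℝ) (hs0 : 0 < s) (hs4 : s < 4) (ht : 0 < t / 2) (hst : t / 2 ≤ s)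
    (w : ℂ) (hw : w = Complex.exp (Complex.I * (Real.arccos (1 - s / 2) : ℂ))) :
    w = (1 - s / 2 : ℝ) + Complex.I * ((s / 2) * Real.sqrt (4 / s - 1) : ℝ) ∧
    fBeta (s - t) w =
      Complex.exp (Complex.I *
        ((Real.arccos (1 - s / 2) + ((s - t) / (2 * Real.sqrt s)) * Real.sqrt (4 - s) : ℝ) : ℂ)) ∧
    fBeta (s - t) w ≠ 1 := by
  subst hw
  set θ := arccos (1 - s / 2)
  have hsin := sin_arccos_one_sub_half_pos hs0 hs4
  have hf : fBeta (s - t) (Complex.exp (Complex.I * θ)) =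
      Complex.exp (Complex.I * (θ + (s - t) / (2 * √s) * √(4 - s) : ℝ)) := by
    rw [fBeta_exp_I_mul _ hsin.ne', one_add_cos_div_sin_arccos_one_sub_half hs0 hs4]
    congr 3
    ring
  refine ⟨?_, hf, ?_⟩
  · rw [mul_comm, Complex.exp_mul_I, ← Complex.ofReal_cos, ← Complex.ofReal_sin,
      cos_arccos_one_sub_half hs0 hs4, sin_arccos_one_sub_half hs0.le,
      half_mul_sqrt_four_div_sub_one hs0]
    ring
  · have hshift : |(s - t) / (2 * √s) * √(4 - s)| ≤ Real.sin θ := by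
      rw [sin_arccos_one_sub_half hs0.le]
      exact abs_sub_div_two_sqrt_mul_sqrt_le hs0 (by linarith) (by linarith)
    obtain ⟨h0, hπ⟩ := add_mem_Ioo_of_abs_le_sin (arccos_pos.mpr (by linarith))
      (arccos_lt_pi.mpr (by linarith)) hshift
    rw [hf]
    exact Complex.exp_I_mul_ne_one h0 hπ
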